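/- arXiv:1611.04701 — 2 statements merged into one kernel-verified Lean document; each statement's English description precedes it below -/
import Mathlib

section
/- Let $A$ be a $q \times p$ matrix, $k_0 > 0$, and $s_0 = (k_0+1)^2$. Suppose the restricted eigenvalue condition $RE(s_0, k_0, A)$ holds with constant $K = K(s_0,k_0,A)$, i.e., for every $|J| \le s_0$ and every $v \ne 0$ with $\|v_{J^c}\|_1 \le k_0\|v_J\|_1$ one has $\|Av\|_2 \ge \|v_J\|_2 / K$. Set $\alpha = 1/((k_0+1) K^2)$ and let $\tau > 0$ satisfy $\lambda_{\min}(A^T A) \ge \alpha - \tau s_0/4$. Then $\Gamma = A^T A$ satisfies the Lower-RE condition: $\theta^T \Gamma \theta \ge \alpha \|\theta\|_2^2 - \tau \|\theta\|_1^2$ for all $\theta \in \mathbb{R}^p$. -/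
/-!
Write `t = ‖θ‖₂`, `L = ‖θ‖₁` and `c = k₀ + 1`. If `c² t² ≤ 4 L²`, the bound on `λ_min(AᵀA)`
already gives `θᵀΓθ ≥ (α - τ c²/4) t² ≥ α t² - τ L²`. Otherwise `θ` is effectively sparse:
the set `J` of coordinates with `c |θᵢ| > t` has at most `c²` elements, the remaining
coordinates carry at most half of `t²` (since `c ∑_{Jᶜ} θᵢ² ≤ t L < c t² / 2`), and `θ` lies in
the cone `‖θ_{Jᶜ}‖₁ ≤ k₀ ‖θ_J‖₁`. The RE condition then gives
`‖Aθ‖² ≥ ‖θ_J‖² / K² ≥ t² / (2K²) ≥ α t²`, as `c > 2` in this case.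
-/

open Finset Matrix

lemma sum_sq_le_sq_sum_abs {ι : Type*} (θ : ι → ℝ) (s : Finset ι) :
    ∑ i ∈ s, θ i ^ 2 ≤ (∑ i ∈ s, |θ i|) ^ 2 := by
  simpa only [sq_abs] using sum_sq_le_sq_sum_of_nonneg (s := s) fun i _ ↦ abs_nonneg (θ i)

lemma dotProduct_transpose_mul_mulVec_self {m n R : Type*} [Fintype m] [Fintype n]
    [CommSemiring R] (A : Matrix m n R) (θ : n → R) :
    θ ⬝ᵥ (Aᵀ * A) *ᵥ θ = ∑ j, (A *ᵥ θ) j ^ 2 := by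
  rw [← mulVec_mulVec, dotProduct_mulVec, vecMul_transpose]
  simp only [dotProduct, sq]

section LargeCoords

variable {ι : Type*} [Fintype ι] (θ : ι → ℝ)

noncomputable def largeCoords (c : ℝ) : Finset ι :=
  {i | √(∑ j, θ j ^ 2) < c * |θ i|}

lemma card_largeCoords_le (c : ℝ) : ((largeCoords θ c).card : ℝ) ≤ c ^ 2 := by
  set J := largeCoords θ c
  set t := √(∑ j, θ j ^ 2)
  rcases J.eq_empty_or_nonempty with hJ | hJ
  · simp [hJ, sq_nonneg]
  have ht : 0 ≤ t := Real.sqrt_nonneg _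
  have hlt : ∀ i ∈ J, t ^ 2 < c ^ 2 * θ i ^ 2 := fun i hi ↦ by
    rw [← sq_abs (θ i), ← mul_pow]
    exact pow_lt_pow_left₀ (mem_filter.mp hi).2 ht two_ne_zero
  have hJsum : ∑ i ∈ J, θ i ^ 2 ≤ t ^ 2 := by
    rw [Real.sq_sqrt (sum_nonneg fun i _ ↦ sq_nonneg _)]
    exact sum_le_sum_of_subset_of_nonneg (subset_univ J) fun i _ _ ↦ sq_nonneg _
  have hcard : (J.card : ℝ) * t ^ 2 < c ^ 2 * t ^ 2 := by
    calc (J.card : ℝ) * t ^ 2 = ∑ i ∈ J, t ^ 2 := by rw [sum_const, nsmul_eq_mul]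
      _ < ∑ i ∈ J, c ^ 2 * θ i ^ 2 := sum_lt_sum_of_nonempty hJ hlt
      _ = c ^ 2 * ∑ i ∈ J, θ i ^ 2 := by rw [mul_sum]
      _ ≤ c ^ 2 * t ^ 2 := mul_le_mul_of_nonneg_left hJsum (sq_nonneg c)
  by_contra! h
  nlinarith [sq_nonneg t]

lemma mul_sum_sq_compl_largeCoords_le [DecidableEq ι] (c : ℝ) :
    c * ∑ i ∈ (largeCoords θ c)ᶜ, θ i ^ 2 ≤ √(∑ i, θ i ^ 2) * ∑ i, |θ i| := by
  set t := √(∑ i, θ i ^ 2)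
  have hsmall : ∀ i ∈ (largeCoords θ c)ᶜ, c * θ i ^ 2 ≤ t * |θ i| := fun i hi ↦ by
    have hi : c * |θ i| ≤ t := by simpa [largeCoords] using hi
    calc c * θ i ^ 2 = c * |θ i| * |θ i| := by rw [← sq_abs, sq, mul_assoc]
      _ ≤ t * |θ i| := mul_le_mul_of_nonneg_right hi (abs_nonneg _)
  calc c * ∑ i ∈ (largeCoords θ c)ᶜ, θ i ^ 2
      ≤ t * ∑ i ∈ (largeCoords θ c)ᶜ, |θ i| := by
        rw [mul_sum, mul_sum]; exact sum_le_sum hsmall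
    _ ≤ t * ∑ i, |θ i| :=
        mul_le_mul_of_nonneg_left
          (sum_le_sum_of_subset_of_nonneg (subset_univ _) fun i _ _ ↦ abs_nonneg _)
          (Real.sqrt_nonneg _)

theorem exists_cone_support_of_sq_sum_abs_le [DecidableEq ι] {c : ℝ} (hc : 0 < c)
    (hθ : 4 * (∑ i, |θ i|) ^ 2 ≤ c ^ 2 * ∑ i, θ i ^ 2) :
    ∃ J : Finset ι, (J.card : ℝ) ≤ c ^ 2 ∧
      ∑ i ∈ Jᶜ, |θ i| ≤ (c - 1) * ∑ i ∈ J, |θ i| ∧ ∑ i, θ i ^ 2 ≤ 2 * ∑ i ∈ J, θ i ^ 2 := by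
  set J := largeCoords θ c
  set L := ∑ i, |θ i|
  set t := √(∑ i, θ i ^ 2)
  have ht : 0 ≤ t := Real.sqrt_nonneg _
  have htsq : t ^ 2 = ∑ i, θ i ^ 2 := Real.sq_sqrt (sum_nonneg fun i _ ↦ sq_nonneg _)
  have hL : 2 * L ≤ c * t := by
    rw [← pow_le_pow_iff_left₀ (by positivity) (by positivity) two_ne_zero, mul_pow, mul_pow,
      htsq]
    linarith
  have hsplit := sum_add_sum_compl J fun i ↦ θ i ^ 2
  have hsplit_abs := sum_add_sum_compl J fun i ↦ |θ i|
  have htail : 2 * ∑ i ∈ Jᶜ, θ i ^ 2 ≤ t ^ 2 := by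
    have := mul_sum_sq_compl_largeCoords_le θ c
    have : c * (2 * ∑ i ∈ Jᶜ, θ i ^ 2) ≤ c * t ^ 2 := by nlinarith
    exact le_of_mul_le_mul_left this hc
  have hhead : ∑ i, θ i ^ 2 ≤ 2 * ∑ i ∈ J, θ i ^ 2 := by linarith
  have hJ_abs : t / 2 ≤ ∑ i ∈ J, |θ i| := by
    rw [← pow_le_pow_iff_left₀ (by positivity) (sum_nonneg fun i _ ↦ abs_nonneg _) two_ne_zero]
    nlinarith [sum_sq_le_sq_sum_abs θ J]
  refine ⟨J, card_largeCoords_le θ c, ?_, hhead⟩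
  nlinarith

end LargeCoords

section RestrictedEigenvalue

variable {m n : Type*} [Fintype m] [Fintype n] [DecidableEq n]

def RestrictedEigenvalue (A : Matrix m n ℝ) (s₀ k₀ K : ℝ) : Prop :=
  ∀ J : Finset n, (J.card : ℝ) ≤ s₀ →
    ∀ v : n → ℝ, v ≠ 0 → ∑ i ∈ Jᶜ, |v i| ≤ k₀ * ∑ i ∈ J, |v i| →
      √(∑ i ∈ J, v i ^ 2) / K ≤ √(∑ j, (A *ᵥ v) j ^ 2)

lemma RestrictedEigenvalue.div_le_sum_mulVec_sq {A : Matrix m n ℝ}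
    {k₀ K : ℝ} (hRE : RestrictedEigenvalue A ((k₀ + 1) ^ 2) k₀ K) (hk₀ : 0 < k₀) (hK : 0 < K)
    {θ : n → ℝ} (hθ : 4 * (∑ i, |θ i|) ^ 2 < (k₀ + 1) ^ 2 * ∑ i, θ i ^ 2) :
    (∑ i, θ i ^ 2) / ((k₀ + 1) * K ^ 2) ≤ ∑ j, (A *ᵥ θ) j ^ 2 := by
  obtain ⟨J, hcard, hcone, hhead⟩ :=
    exists_cone_support_of_sq_sum_abs_le θ (by linarith : 0 < k₀ + 1) hθ.le
  have hθ0 : θ ≠ 0 := by rintro rfl; simp at hθ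
  have hc : 2 < k₀ + 1 := by
    by_contra! h
    have hc4 : (k₀ + 1) ^ 2 ≤ 4 := by nlinarith
    have := mul_le_mul_of_nonneg_right hc4 (sum_nonneg fun i (_ : i ∈ univ) ↦ sq_nonneg (θ i))
    linarith [sum_sq_le_sq_sum_abs θ univ]
  have hRE_J := hRE J hcard θ hθ0 (by simpa using hcone)
  have hJ : (∑ i ∈ J, θ i ^ 2) / K ^ 2 ≤ ∑ j, (A *ᵥ θ) j ^ 2 := by
    have := pow_le_pow_left₀ (by positivity) hRE_J 2
    rwa [div_pow, Real.sq_sqrt (sum_nonneg fun i _ ↦ sq_nonneg _),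
      Real.sq_sqrt (sum_nonneg fun j _ ↦ sq_nonneg _)] at this
  calc (∑ i, θ i ^ 2) / ((k₀ + 1) * K ^ 2)
      ≤ (∑ i, θ i ^ 2) / (2 * K ^ 2) := by gcongr
    _ = (∑ i, θ i ^ 2) / 2 / K ^ 2 := by ring
    _ ≤ (∑ i ∈ J, θ i ^ 2) / K ^ 2 := by
        gcongr
        linarith
    _ ≤ _ := hJ

end RestrictedEigenvalue

/-- RE(s₀, k₀, A) with s₀ = (k₀+1)², together with a lower bound
λ_min(AᵀA) ≥ α - τ s₀/4 where α = 1/((k₀+1) K²), implies the Lower-RE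
condition for Γ = AᵀA with curvature α and tolerance τ. -/
theorem RE_implies_lowerRE {q p : ℕ} (A : Matrix (Fin q) (Fin p) ℝ)
    (k₀ K τ : ℝ) (hk₀ : 0 < k₀) (hK : 0 < K) (hτ : 0 < τ)
    (hRE : ∀ J : Finset (Fin p), (J.card : ℝ) ≤ (k₀ + 1) ^ 2 →
      ∀ v : Fin p → ℝ, v ≠ 0 → (∑ i ∈ Jᶜ, |v i|) ≤ k₀ * (∑ i ∈ J, |v i|) →
        Real.sqrt (∑ i ∈ J, v i ^ 2) / K ≤ Real.sqrt (∑ j, (A.mulVec v j) ^ 2))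
    (hlmin : ∀ θ : Fin p → ℝ,
      (1 / ((k₀ + 1) * K ^ 2) - τ * ((k₀ + 1) ^ 2) / 4) * (∑ i, θ i ^ 2) ≤
        θ ⬝ᵥ (Aᵀ * A).mulVec θ) :
    ∀ θ : Fin p → ℝ,
      θ ⬝ᵥ (Aᵀ * A).mulVec θ ≥
        (1 / ((k₀ + 1) * K ^ 2)) * (∑ i, θ i ^ 2) - τ * (∑ i, |θ i|) ^ 2 := by
  intro θ
  by_cases hspread : (k₀ + 1) ^ 2 * ∑ i, θ i ^ 2 ≤ 4 * (∑ i, |θ i|) ^ 2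
  · have := mul_le_mul_of_nonneg_left hspread hτ.le
    linarith [hlmin θ]
  · have hsparse :=
      RestrictedEigenvalue.div_le_sum_mulVec_sq (A := A) hRE hk₀ hK (not_le.mp hspread)
    rw [dotProduct_transpose_mul_mulVec_self, one_div_mul_eq_div]
    linarith [mul_nonneg hτ.le (sq_nonneg (∑ i, |θ i|))]
end

section
/- Let $\delta > 0$, $0 < s < m/2$, and let $\Delta$ be an $m \times m$ matrix with $|u^T \Delta v| \le \delta$ for all unit vectors $u, v$ each with at most $s$ nonzero coordinates. Then for every $v \in \mathbb{R}^m$ with $\|v\|_1 \le \sqrt{s}\,\|v\|_2$, we have $|v^T \Delta v| \le 4\delta \|v\|_2^2$. -/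
/-! Sort the coordinates of `v` by decreasing modulus and cut them into consecutive blocks of `s`
coordinates, giving `s`-sparse pieces `u₀, u₁, …` with `v = ∑ uₖ`. Every entry of block `k + 1` is
at most every entry of block `k`, so `‖u_{k+1}‖₂ ≤ ‖uₖ‖₁ / √s`, whence
`∑ ‖uₖ‖₂ ≤ ‖v‖₂ + ‖v‖₁ / √s ≤ 2 ‖v‖₂` on the cone. Expanding `vᵀΔv` bilinearly and applying the
hypothesis to each normalized pair of pieces gives `|vᵀΔv| ≤ δ (∑ ‖uₖ‖₂)² ≤ 4δ ‖v‖₂²`. -/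

open Finset Matrix

section Sparse

variable {ι : Type*}

def IsSparse {α : Type*} [Zero α] (s : ℕ) (u : ι → α) : Prop :=
  ∃ T : Finset ι, T.card ≤ s ∧ ∀ i ∉ T, u i = 0

theorem IsSparse.smul {M α : Type*} [Zero α] [SMulZeroClass M α] {s : ℕ} {u : ι → α}
    (hu : IsSparse s u) (c : M) : IsSparse s (c • u) := by
  obtain ⟨T, hT, hu⟩ := hu
  exact ⟨T, hT, fun i hi => by simp [hu i hi]⟩

variable [Fintype ι]

theorem sum_sq_pos_of_ne_zero {u : ι → ℝ} (hu : u ≠ 0) : 0 < ∑ i, u i ^ 2 := by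
  obtain ⟨i, hi⟩ := Function.ne_iff.mp hu
  exact (sq_pos_of_ne_zero hi).trans_le (single_le_sum (fun j _ => sq_nonneg (u j)) (mem_univ i))

theorem sum_sq_inv_sqrt_smul {u : ι → ℝ} (hu : 0 < ∑ i, u i ^ 2) :
    ∑ i, ((√(∑ j, u j ^ 2))⁻¹ • u) i ^ 2 = 1 := by
  simp only [Pi.smul_apply, smul_eq_mul, mul_pow, ← mul_sum, inv_pow, Real.sq_sqrt hu.le]
  exact inv_mul_cancel₀ hu.ne'

theorem abs_dotProduct_mulVec_le_of_isSparse {s : ℕ} {δ : ℝ} {Δ : Matrix ι ι ℝ}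
    (hΔ : ∀ u v : ι → ℝ, ∑ i, u i ^ 2 = 1 → ∑ i, v i ^ 2 = 1 → IsSparse s u → IsSparse s v →
      |u ⬝ᵥ Δ *ᵥ v| ≤ δ)
    {u v : ι → ℝ} (hu : IsSparse s u) (hv : IsSparse s v) :
    |u ⬝ᵥ Δ *ᵥ v| ≤ δ * (√(∑ i, u i ^ 2) * √(∑ i, v i ^ 2)) := by
  rcases eq_or_ne u 0 with rfl | hu0
  · simp
  rcases eq_or_ne v 0 with rfl | hv0
  · simp
  have hu2 := sum_sq_pos_of_ne_zero hu0
  have hv2 := sum_sq_pos_of_ne_zero hv0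
  set a := √(∑ i, u i ^ 2)
  set b := √(∑ i, v i ^ 2)
  have ha : 0 < a := Real.sqrt_pos.2 hu2
  have hb : 0 < b := Real.sqrt_pos.2 hv2
  have key := hΔ _ _ (sum_sq_inv_sqrt_smul hu2) (sum_sq_inv_sqrt_smul hv2) (hu.smul a⁻¹)
    (hv.smul b⁻¹)
  rw [mulVec_smul, smul_dotProduct, dotProduct_smul, smul_eq_mul, smul_eq_mul, abs_mul, abs_mul,
    abs_inv, abs_inv, abs_of_pos ha, abs_of_pos hb] at key
  calc |u ⬝ᵥ Δ *ᵥ v| = a * b * (a⁻¹ * (b⁻¹ * |u ⬝ᵥ Δ *ᵥ v|)) := by field_simp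
    _ ≤ a * b * δ := by gcongr
    _ = δ * (a * b) := mul_comm _ _

theorem abs_sum_dotProduct_mulVec_sum_le {κ : Type*} (K : Finset κ) (Δ : Matrix ι ι ℝ)
    (u : κ → ι → ℝ) (c : κ → ℝ) {δ : ℝ} (h : ∀ j k, |u j ⬝ᵥ Δ *ᵥ u k| ≤ δ * (c j * c k)) :
    |(∑ k ∈ K, u k) ⬝ᵥ Δ *ᵥ ∑ k ∈ K, u k| ≤ δ * (∑ k ∈ K, c k) ^ 2 := by
  rw [mulVec_sum, sum_dotProduct]
  simp only [dotProduct_sum]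
  calc |∑ j ∈ K, ∑ k ∈ K, u j ⬝ᵥ Δ *ᵥ u k|
      ≤ ∑ j ∈ K, ∑ k ∈ K, |u j ⬝ᵥ Δ *ᵥ u k| :=
        (abs_sum_le_sum_abs _ _).trans (sum_le_sum fun j _ => abs_sum_le_sum_abs _ _)
    _ ≤ ∑ j ∈ K, ∑ k ∈ K, δ * (c j * c k) := sum_le_sum fun j _ => sum_le_sum fun k _ => h j k
    _ = δ * (∑ k ∈ K, c k) ^ 2 := by rw [sq, sum_mul_sum, mul_sum]; simp only [mul_sum]

end Sparse

theorem mem_Ico_of_div_eq {n s k : ℕ} (hs : 0 < s) (h : n / s = k) :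
    n ∈ Ico (k * s) (k * s + s) := by
  rw [Nat.div_eq_iff hs] at h
  rw [mem_Ico]
  omega

section Rank

variable {ι : Type*}

def rankBlock (r : ι → ℕ) (s k : ℕ) (v : ι → ℝ) : ι → ℝ :=
  fun i => if r i / s = k then v i else 0

variable {r : ι → ℕ} {s : ℕ}

theorem sum_rankBlock {N : ℕ} (hN : ∀ i, r i / s < N) (v : ι → ℝ) :
    ∑ k ∈ range N, rankBlock r s k v = v := by
  ext i
  simp [rankBlock, Finset.sum_apply, hN i]

variable [Fintype ι]

theorem exists_equiv_fin_antitone {α : Type*} [LinearOrder α] (f : ι → α) :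
    ∃ g : Fin (Fintype.card ι) ≃ ι, Antitone (f ∘ g) := by
  set e := (Fintype.equivFin ι).symm
  refine ⟨(Tuple.sort (OrderDual.toDual ∘ f ∘ e)).trans e, ?_⟩
  exact monotone_toDual_comp_iff.mp (Tuple.monotone_sort (OrderDual.toDual ∘ f ∘ e))

/-- `a` is the non-increasing rearrangement of `|v|`, padded with zeros, and `r i` is the position
of `|v i|` in it. -/
theorem exists_rank_antitone_abs (v : ι → ℝ) :
    ∃ (r : ι → ℕ) (a : ℕ → ℝ), Function.Injective r ∧ Antitone a ∧ (∀ i, a (r i) = |v i|) ∧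
      ∀ n ∉ Set.range r, a n = 0 := by
  obtain ⟨g, hg⟩ := exists_equiv_fin_antitone fun i => |v i|
  refine ⟨fun i => g.symm i, fun n => if h : n < Fintype.card ι then |v (g ⟨n, h⟩)| else 0,
    Fin.val_injective.comp g.symm.injective, ?_, fun i => by simp, ?_⟩
  · intro n n' hnn'
    dsimp only
    split_ifs with h' h
    · exact hg (Fin.mk_le_mk.mpr hnn')
    · omega
    · positivity
    · rfl
  · intro n hn
    exact dif_neg fun h => hn ⟨g ⟨n, h⟩, by simp⟩

theorem isSparse_rankBlock (hs : 0 < s) (hr : Function.Injective r) (k : ℕ) (v : ι → ℝ) :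
    IsSparse s (rankBlock r s k v) := by
  refine ⟨({i | r i / s = k} : Finset ι), ?_, fun i hi => by simp_all [rankBlock]⟩
  calc #{i | r i / s = k} ≤ #(Ico (k * s) (k * s + s)) :=
        card_le_card_of_injOn r (fun i hi => mem_Ico_of_div_eq hs (mem_filter.mp hi).2) hr.injOn
    _ = s := by simp

theorem sum_sq_rankBlock_le_sum_sq (k : ℕ) (v : ι → ℝ) :
    ∑ i, rankBlock r s k v i ^ 2 ≤ ∑ i, v i ^ 2 :=
  sum_le_sum fun i _ => by unfold rankBlock; split_ifs <;> simp [sq_nonneg]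

theorem sum_sq_rankBlock_le (hs : 0 < s) (hr : Function.Injective r) {v : ι → ℝ} {a : ℕ → ℝ}
    (hav : ∀ i, a (r i) = |v i|) (k : ℕ) :
    ∑ i, rankBlock r s k v i ^ 2 ≤ ∑ n ∈ Ico (k * s) (k * s + s), a n ^ 2 := by
  calc ∑ i, rankBlock r s k v i ^ 2 = ∑ i with r i / s = k, a (r i) ^ 2 := by
        rw [sum_filter]
        refine sum_congr rfl fun i _ => ?_
        rw [hav, sq_abs, rankBlock]
        split_ifs <;> simp
    _ = ∑ n ∈ image r ({i | r i / s = k} : Finset ι), a n ^ 2 :=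
        (sum_image (f := fun n => a n ^ 2) fun _ _ _ _ h => hr h).symm
    _ ≤ ∑ n ∈ Ico (k * s) (k * s + s), a n ^ 2 := by
        refine sum_le_sum_of_subset_of_nonneg ?_ fun n _ _ => sq_nonneg (a n)
        intro n hn
        obtain ⟨i, hi, rfl⟩ := mem_image.mp hn
        exact mem_Ico_of_div_eq hs (mem_filter.mp hi).2

theorem sum_range_le_sum_abs (hr : Function.Injective r) {v : ι → ℝ} {a : ℕ → ℝ}
    (hav : ∀ i, a (r i) = |v i|) (ha0 : ∀ n ∉ Set.range r, a n = 0) (ha : ∀ n, 0 ≤ a n)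
    (L : ℕ) : ∑ n ∈ range L, a n ≤ ∑ i, |v i| := by
  classical
  calc ∑ n ∈ range L, a n ≤ ∑ n ∈ range L ∪ univ.image r, a n :=
        sum_le_sum_of_subset_of_nonneg subset_union_left fun n _ _ => ha n
    _ = ∑ n ∈ univ.image r, a n := by
        refine (sum_subset subset_union_right fun n _ hn => ha0 n ?_).symm
        rintro ⟨i, rfl⟩
        exact hn (mem_image_of_mem r (mem_univ i))
    _ = ∑ i, |v i| := by rw [sum_image fun _ _ _ _ h => hr h]; simp only [hav]

end Rank

theorem sqrt_mul_sqrt_sum_sq_Ico_le {a : ℕ → ℝ} (ha : Antitone a) (ha0 : ∀ n, 0 ≤ a n)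
    (s k : ℕ) :
    √s * √(∑ n ∈ Ico (k * s + s) (k * s + s + s), a n ^ 2) ≤
      ∑ n ∈ Ico (k * s) (k * s + s), a n := by
  set c := a (k * s + s)
  have hlate : ∑ n ∈ Ico (k * s + s) (k * s + s + s), a n ^ 2 ≤ s * c ^ 2 := by
    simpa using sum_le_card_nsmul (Ico (k * s + s) (k * s + s + s)) (fun n => a n ^ 2) (c ^ 2)
      fun n hn => pow_le_pow_left₀ (ha0 n) (ha (mem_Ico.mp hn).1) 2
  have hearly : s * c ≤ ∑ n ∈ Ico (k * s) (k * s + s), a n := by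
    simpa using card_nsmul_le_sum (Ico (k * s) (k * s + s)) a c
      fun n hn => ha (mem_Ico.mp hn).2.le
  calc √s * √(∑ n ∈ Ico (k * s + s) (k * s + s + s), a n ^ 2) ≤ √s * √(s * c ^ 2) := by
        gcongr
    _ = s * c := by
        rw [Real.sqrt_mul (Nat.cast_nonneg s), Real.sqrt_sq (ha0 _), ← mul_assoc,
          Real.mul_self_sqrt (Nat.cast_nonneg s)]
    _ ≤ _ := hearly

theorem sum_range_sum_Ico_mul {M : Type*} [AddCommMonoid M] (f : ℕ → M) (s N : ℕ) :
    ∑ k ∈ range N, ∑ n ∈ Ico (k * s) (k * s + s), f n = ∑ n ∈ range (N * s), f n := by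
  induction N with
  | zero => simp
  | succ N ih =>
    rw [sum_range_succ, ih, Nat.succ_mul, sum_range_add_sum_Ico _ (Nat.le_add_right _ _)]

theorem exists_sparse_decomposition {ι : Type*} [Fintype ι] {s : ℕ} (hs : 0 < s) (v : ι → ℝ) :
    ∃ (K : Finset ℕ) (u : ℕ → ι → ℝ), (∀ k, IsSparse s (u k)) ∧ ∑ k ∈ K, u k = v ∧
      ∑ k ∈ K, √(∑ i, u k i ^ 2) ≤ √(∑ i, v i ^ 2) + (∑ i, |v i|) / √s := by
  obtain ⟨r, a, hr, ha, hav, ha0⟩ := exists_rank_antitone_abs v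
  have ha_nonneg : ∀ n, 0 ≤ a n := by
    intro n
    by_cases hn : n ∈ Set.range r
    · obtain ⟨i, rfl⟩ := hn
      exact (hav i).symm ▸ abs_nonneg (v i)
    · exact (ha0 n hn).ge
  have hs' : (0 : ℝ) < √s := Real.sqrt_pos.2 (Nat.cast_pos.2 hs)
  set N := univ.sup r
  have hN : ∀ i, r i / s < N + 1 :=
    fun i => Nat.lt_succ_of_le ((Nat.div_le_self _ _).trans (le_sup (mem_univ i)))
  have htail : ∀ k, √(∑ i, rankBlock r s (k + 1) v i ^ 2) ≤
      (∑ n ∈ Ico (k * s) (k * s + s), a n) / √s := by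
    intro k
    rw [le_div_iff₀' hs']
    calc √s * √(∑ i, rankBlock r s (k + 1) v i ^ 2)
        ≤ √s * √(∑ n ∈ Ico (k * s + s) (k * s + s + s), a n ^ 2) := by
          gcongr
          simpa only [Nat.succ_mul] using sum_sq_rankBlock_le hs hr hav (k + 1)
      _ ≤ _ := sqrt_mul_sqrt_sum_sq_Ico_le ha ha_nonneg s k
  refine ⟨range (N + 1), fun k => rankBlock r s k v, fun k => isSparse_rankBlock hs hr k v,
    sum_rankBlock hN v, ?_⟩
  rw [sum_range_succ', add_comm]
  refine add_le_add (Real.sqrt_le_sqrt (sum_sq_rankBlock_le_sum_sq 0 v)) ?_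
  calc ∑ k ∈ range N, √(∑ i, rankBlock r s (k + 1) v i ^ 2)
      ≤ ∑ k ∈ range N, (∑ n ∈ Ico (k * s) (k * s + s), a n) / √s :=
        sum_le_sum fun k _ => htail k
    _ = (∑ n ∈ range (N * s), a n) / √s := by rw [← sum_div, sum_range_sum_Ico_mul]
    _ ≤ (∑ i, |v i|) / √s := by gcongr; exact sum_range_le_sum_abs hr hav ha0 ha_nonneg _

theorem quadratic_form_bound_on_cone_general {m : ℕ} (s : ℕ) (hs : 0 < s)
    (δ : ℝ) (hδ : 0 < δ) (Δ : Matrix (Fin m) (Fin m) ℝ)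
    (hΔ : ∀ u v : Fin m → ℝ,
      (∑ i, u i ^ 2) = 1 → (∑ i, v i ^ 2) = 1 →
      (∃ T : Finset (Fin m), T.card ≤ s ∧ ∀ i ∉ T, u i = 0) →
      (∃ T : Finset (Fin m), T.card ≤ s ∧ ∀ i ∉ T, v i = 0) →
      |u ⬝ᵥ Δ.mulVec v| ≤ δ) :
    ∀ v : Fin m → ℝ, (∑ i, |v i|) ≤ Real.sqrt s * Real.sqrt (∑ i, v i ^ 2) →
      |v ⬝ᵥ Δ.mulVec v| ≤ 4 * δ * (∑ i, v i ^ 2) := by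
  intro v hv
  obtain ⟨K, u, hu, hsum, hK⟩ := exists_sparse_decomposition hs v
  have hl1 : (∑ i, |v i|) / √s ≤ √(∑ i, v i ^ 2) :=
    div_le_of_le_mul₀ (Real.sqrt_nonneg _) (Real.sqrt_nonneg _) (by linarith)
  calc |v ⬝ᵥ Δ *ᵥ v| = |(∑ k ∈ K, u k) ⬝ᵥ Δ *ᵥ ∑ k ∈ K, u k| := by rw [hsum]
    _ ≤ δ * (∑ k ∈ K, √(∑ i, u k i ^ 2)) ^ 2 := abs_sum_dotProduct_mulVec_sum_le K Δ u _
        fun j k => abs_dotProduct_mulVec_le_of_isSparse hΔ (hu j) (hu k)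
    _ ≤ δ * (2 * √(∑ i, v i ^ 2)) ^ 2 := by gcongr; linarith
    _ = 4 * δ * (∑ i, v i ^ 2) := by rw [mul_pow, Real.sq_sqrt (by positivity)]; ring

/-- If |uᵀΔv| ≤ δ for all s-sparse unit vectors u, v, then for every v in the
cone ‖v‖₁ ≤ √s ‖v‖₂ we have |vᵀΔv| ≤ 4δ ‖v‖₂². -/
theorem quadratic_form_bound_on_cone {m : ℕ} (s : ℕ) (hs : 0 < s)
    (hsm : (s : ℝ) < m / 2) (δ : ℝ) (hδ : 0 < δ) (Δ : Matrix (Fin m) (Fin m) ℝ)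
    (hΔ : ∀ u v : Fin m → ℝ,
      (∑ i, u i ^ 2) = 1 → (∑ i, v i ^ 2) = 1 →
      (∃ T : Finset (Fin m), T.card ≤ s ∧ ∀ i ∉ T, u i = 0) →
      (∃ T : Finset (Fin m), T.card ≤ s ∧ ∀ i ∉ T, v i = 0) →
      |u ⬝ᵥ Δ.mulVec v| ≤ δ) :
    ∀ v : Fin m → ℝ, (∑ i, |v i|) ≤ Real.sqrt s * Real.sqrt (∑ i, v i ^ 2) →
      |v ⬝ᵥ Δ.mulVec v| ≤ 4 * δ * (∑ i, v i ^ 2) :=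
  quadratic_form_bound_on_cone_general s hs δ hδ Δ hΔ
end
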